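/- Let B ⊆ B(H) be a unital C*-algebra, K a positive trace-one operator, K̄ the closure of the range of K, and T = [B K̄] the closed span of {Bx : B ∈ B, x ∈ K̄}. Then B is beable for K (i.e. Tr(K[A,B]*[A,B]) = 0 for all A,B ∈ B) if and only if the compression P_T B P_T is an abelian set of operators, equivalently B ⊆ B(T^⊥) ⊕ N for some abelian subalgebra N of B(T). -/

import Mathlib

/-!
Since `Tr(K c⋆c) = ∑ λₙ ‖c eₙ‖²`, beability says that every commutator `[a, b]` of `𝔅` kills
the eigenvectors `eₙ` with `λₙ ≠ 0`, equivalently (by continuity) the range of `K`. As `T` is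
`𝔅`-invariant, `(P a P)(P b P) = a b P`, so the compressions commute iff every commutator
vanishes on `T`. One direction is then `range K ⊆ T` (as `1 ∈ 𝔅`); for the other, the identity
`[a, b] c = [a, b c] - b [a, c]` carries the vanishing from `range K` to `𝔅 • range K`, whose
closed span is `T`.
-/
/-- The normal state `T ↦ Tr(KT)` associated to `K = ∑ₙ λₙ |eₙ⟩⟨eₙ|`. -/
noncomputable def trState {H : Type*} [NormedAddCommGroup H] [InnerProductSpace ℂ H]
    (e : ℕ → H) (lam : ℕ → ℝ) (T : H →L[ℂ] H) : ℂ :=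
  ∑' n, (lam n : ℂ) * (inner ℂ (e n) (T (e n)) : ℂ)

/-- `T = [𝔅 K̄]`: the closed span of {Ax : A ∈ 𝔅, x ∈ closure (range K)}. -/
noncomputable def beableSpace {H : Type*} [NormedAddCommGroup H] [InnerProductSpace ℂ H]
    (𝔅 : Set (H →L[ℂ] H)) (K : H →L[ℂ] H) : Submodule ℂ H :=
  (Submodule.span ℂ
    {y | ∃ a ∈ 𝔅, ∃ x ∈ closure (Set.range K), a x = y}).topologicalClosure

/-- The orthogonal projection of H onto `beableSpace 𝔅 K`, as an operator on H. -/
noncomputable def projT {H : Type*} [NormedAddCommGroup H] [InnerProductSpace ℂ H]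
    [CompleteSpace H] (𝔅 : Set (H →L[ℂ] H)) (K : H →L[ℂ] H) : H →L[ℂ] H :=
  haveI : CompleteSpace (beableSpace 𝔅 K) :=
    (Submodule.isClosed_topologicalClosure _).completeSpace_coe
  (beableSpace 𝔅 K).subtypeL.comp ((beableSpace 𝔅 K).orthogonalProjection)


section Compression

variable {𝕜 E : Type*} [RCLike 𝕜] [NormedAddCommGroup E] [InnerProductSpace 𝕜 E]
  (U : Submodule 𝕜 E) [U.HasOrthogonalProjection] {a b : E →L[𝕜] E}

theorem Submodule.compression_mul_compression (ha : ∀ x ∈ U, a x ∈ U) (hb : ∀ x ∈ U, b x ∈ U) :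
    (U.starProjection ∘L a ∘L U.starProjection) * (U.starProjection ∘L b ∘L U.starProjection) =
      a * b * U.starProjection := by
  ext x
  have hbx : b (U.starProjection x) ∈ U := hb _ (U.starProjection_apply_mem x)
  simp [Submodule.starProjection_eq_self_iff.mpr hbx,
    Submodule.starProjection_eq_self_iff.mpr (ha _ hbx)]

theorem Submodule.commute_compression_iff (ha : ∀ x ∈ U, a x ∈ U) (hb : ∀ x ∈ U, b x ∈ U) :
    Commute (U.starProjection ∘L a ∘L U.starProjection)
        (U.starProjection ∘L b ∘L U.starProjection) ↔ U ≤ (a * b - b * a).toLinearMap.ker := by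
  rw [commute_iff_eq, U.compression_mul_compression ha hb, U.compression_mul_compression hb ha,
    ← sub_eq_zero, ← sub_mul]
  conv_rhs => rw [← U.range_starProjection, LinearMap.range_le_ker_iff]
  exact ContinuousLinearMap.coe_injective.eq_iff.symm

end Compression

section BeableSpace

variable {H : Type*} [NormedAddCommGroup H] [InnerProductSpace ℂ H]

instance [CompleteSpace H] (𝔅 : Set (H →L[ℂ] H)) (K : H →L[ℂ] H) :
    CompleteSpace (beableSpace 𝔅 K) :=
  (Submodule.isClosed_topologicalClosure _).completeSpace_coe

theorem projT_eq_starProjection [CompleteSpace H] (𝔅 : Set (H →L[ℂ] H)) (K : H →L[ℂ] H) :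
    projT 𝔅 K = (beableSpace 𝔅 K).starProjection :=
  rfl

theorem apply_mem_beableSpace {S : Type*} [SetLike S (H →L[ℂ] H)] [MulMemClass S (H →L[ℂ] H)]
    {𝔅 : S} {K a : H →L[ℂ] H} (ha : a ∈ 𝔅) {x : H}
    (hx : x ∈ beableSpace (𝔅 : Set (H →L[ℂ] H)) K) :
    a x ∈ beableSpace (𝔅 : Set (H →L[ℂ] H)) K := by
  refine Submodule.topologicalClosure_mono ?_ (Submodule.topologicalClosure_map a _ ⟨x, hx, rfl⟩)
  rw [Submodule.map_span, Submodule.span_le]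
  rintro _ ⟨_, ⟨b, hb, z, hz, rfl⟩, rfl⟩
  exact Submodule.subset_span ⟨a * b, mul_mem ha hb, z, hz, rfl⟩

theorem beableSpace_le_ker {𝔅 : Set (H →L[ℂ] H)} {K c : H →L[ℂ] H}
    (h : ∀ a ∈ 𝔅, ∀ z, c (a (K z)) = 0) : beableSpace 𝔅 K ≤ c.toLinearMap.ker := by
  refine Submodule.topologicalClosure_minimal _ ?_ c.isClosed_ker
  rw [Submodule.span_le]
  rintro _ ⟨a, ha, x, hx, rfl⟩
  have hrange : Set.range K ⊆ (c * a).toLinearMap.ker := by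
    rintro _ ⟨z, rfl⟩
    exact h a ha z
  exact closure_minimal hrange (c * a).isClosed_ker hx

theorem mem_beableSpace_of_mem_range {𝔅 : Set (H →L[ℂ] H)} (h𝔅 : 1 ∈ 𝔅) {K : H →L[ℂ] H} {x : H}
    (hx : x ∈ Set.range K) : x ∈ beableSpace 𝔅 K :=
  Submodule.le_topologicalClosure _ (Submodule.subset_span ⟨1, h𝔅, x, subset_closure hx, rfl⟩)

end BeableSpace

section Diagonal

variable {H : Type*} [NormedAddCommGroup H] [InnerProductSpace ℂ H]
  {e : ℕ → H} {lam : ℕ → ℝ} {K : H →L[ℂ] H}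

theorem apply_eq_smul_of_diagonal (he : Orthonormal ℂ e)
    (hK : ∀ y : H, K y = ∑' n, lam n • ((inner ℂ (e n) y : ℂ) • e n)) (n : ℕ) :
    K (e n) = lam n • e n := by
  rw [hK, tsum_eq_single n fun m hm => by simp [orthonormal_iff_ite.mp he m n, hm]]
  simp [he.1 n]

theorem mem_range_of_diagonal (he : Orthonormal ℂ e)
    (hK : ∀ y : H, K y = ∑' n, lam n • ((inner ℂ (e n) y : ℂ) • e n)) {n : ℕ} (hn : lam n ≠ 0) :
    e n ∈ Set.range K :=
  ⟨(lam n)⁻¹ • e n, by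
    rw [K.map_smul_of_tower, apply_eq_smul_of_diagonal he hK, inv_smul_smul₀ hn]⟩

theorem apply_apply_eq_zero_of_diagonal
    (hK : ∀ y : H, K y = ∑' n, lam n • ((inner ℂ (e n) y : ℂ) • e n)) {c : H →L[ℂ] H}
    (hc : ∀ n, lam n ≠ 0 → c (e n) = 0) (z : H) : c (K z) = 0 := by
  rw [hK]
  refine tsum_mem (s := c.toLinearMap.ker) c.isClosed_ker fun n => ?_
  by_cases hn : lam n = 0
  · simp [hn]
  · simp [hc n hn]

theorem beableSpace_le_ker_commutator {S : Type*} [SetLike S (H →L[ℂ] H)]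
    [MulMemClass S (H →L[ℂ] H)] {𝔅 : S}
    (hK : ∀ y : H, K y = ∑' n, lam n • ((inner ℂ (e n) y : ℂ) • e n))
    (h : ∀ a ∈ 𝔅, ∀ b ∈ 𝔅, ∀ n, lam n ≠ 0 → (a * b - b * a) (e n) = 0)
    {a b : H →L[ℂ] H} (ha : a ∈ 𝔅) (hb : b ∈ 𝔅) :
    beableSpace (𝔅 : Set (H →L[ℂ] H)) K ≤ (a * b - b * a).toLinearMap.ker := by
  refine beableSpace_le_ker fun c hc z => ?_
  have hleibniz : (a * b - b * a) * c = (a * (b * c) - b * c * a) - b * (a * c - c * a) := by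
    noncomm_ring
  rw [← mul_apply_eq_comp, hleibniz, sub_apply, mul_apply_eq_comp,
    apply_apply_eq_zero_of_diagonal hK (h a ha _ (mul_mem hb hc)),
    apply_apply_eq_zero_of_diagonal hK (h a ha c hc), map_zero, sub_zero]

variable [CompleteSpace H]

theorem trState_star_mul_self (d : H →L[ℂ] H) :
    trState e lam (star d * d) = ((∑' n, lam n * ‖d (e n)‖ ^ 2 : ℝ) : ℂ) := by
  rw [trState, Complex.ofReal_tsum]
  congr 1 with n
  rw [mul_apply_eq_comp, ContinuousLinearMap.star_eq_adjoint,
    ContinuousLinearMap.adjoint_inner_right, inner_self_eq_norm_sq_to_K]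
  push_cast
  rfl

theorem trState_star_mul_self_eq_zero_iff (he : Orthonormal ℂ e) (hlam : ∀ n, 0 ≤ lam n)
    (hsumm : Summable lam) (d : H →L[ℂ] H) :
    trState e lam (star d * d) = 0 ↔ ∀ n, lam n ≠ 0 → d (e n) = 0 := by
  have hnonneg : ∀ n, 0 ≤ lam n * ‖d (e n)‖ ^ 2 := fun n => by have := hlam n; positivity
  have hbound : ∀ n, lam n * ‖d (e n)‖ ^ 2 ≤ lam n * ‖d‖ ^ 2 := fun n => by
    have := hlam n
    gcongr
    simpa [he.1 n] using d.le_opNorm (e n)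
  have hsummable := (hsumm.mul_right (‖d‖ ^ 2)).of_nonneg_of_le hnonneg hbound
  rw [trState_star_mul_self, Complex.ofReal_eq_zero, ← hsummable.hasSum_iff,
    hasSum_zero_iff_of_nonneg hnonneg, funext_iff]
  simp only [Pi.zero_apply, mul_eq_zero, pow_eq_zero_iff two_ne_zero, norm_eq_zero,
    or_iff_not_imp_left]

end Diagonal

/-- B is beable for K (Tr(K[A,B]*[A,B]) = 0 for all A,B ∈ B) iff the compression
P_T B P_T of B to T = [B K̄] is an abelian set of operators. -/
theorem stmt_10 {H : Type*} [NormedAddCommGroup H] [InnerProductSpace ℂ H] [CompleteSpace H]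
    (𝔅 : StarSubalgebra ℂ (H →L[ℂ] H))
    (K : H →L[ℂ] H) (e : ℕ → H) (he : Orthonormal ℂ e)
    (lam : ℕ → ℝ) (hlam : ∀ n, 0 ≤ lam n) (hsum : ∑' n, lam n = 1)
    (hK : ∀ y : H, K y = ∑' n, lam n • ((inner ℂ (e n) y : ℂ) • e n)) :
    (∀ a ∈ 𝔅, ∀ b ∈ 𝔅,
        trState e lam (star (a * b - b * a) * (a * b - b * a)) = 0) ↔
      (∀ a ∈ 𝔅, ∀ b ∈ 𝔅,
        Commute (projT (𝔅 : Set (H →L[ℂ] H)) K ∘L a ∘L projT (𝔅 : Set (H →L[ℂ] H)) K)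
          (projT (𝔅 : Set (H →L[ℂ] H)) K ∘L b ∘L projT (𝔅 : Set (H →L[ℂ] H)) K)) := by
  have hsumm : Summable lam := by
    by_contra h
    simp [tsum_eq_zero_of_not_summable h] at hsum
  have hcommute_iff {a b} (ha : a ∈ 𝔅) (hb : b ∈ 𝔅) :=
    (beableSpace (𝔅 : Set (H →L[ℂ] H)) K).commute_compression_iff
      (fun _ => apply_mem_beableSpace ha) (fun _ => apply_mem_beableSpace hb)
  simp only [trState_star_mul_self_eq_zero_iff he hlam hsumm, projT_eq_starProjection]
  constructor
  · intro h a ha b hb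
    exact (hcommute_iff ha hb).mpr (beableSpace_le_ker_commutator hK h ha hb)
  · intro h a ha b hb n hn
    exact (hcommute_iff ha hb).mp (h a ha b hb)
      (mem_beableSpace_of_mem_range (one_mem 𝔅) (mem_range_of_diagonal he hK hn))
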